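/- arXiv:1501.00265 — 4 statements merged into one kernel-verified Lean document; each statement's English description precedes it below -/
import Mathlib

section
/- Let f : Z_k^n → Z_k be a function of k-valued logic with at least one essential variable (k ≥ 2). Then f has at least one strongly essential variable, i.e., there exists an essential variable x_i and a constant c ∈ Z_k such that the set of essential variables of the subfunction f(x_i = c) equals Ess(f) \ {x_i}. -/
/-!
Choose an essential `x i` and a constant `c` for which `f(x i = c)` has as many essential
variables as possible. If some `x j ∈ Ess f \ {x i}` were inessential in `f(x i = c)`, pick `e`
keeping `x i` essential in `f(x j = e)`. Since `x j` is inessential in `f(x i = c)`, we have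
`f(x j = e)(x i = c) = f(x i = c)`, so `Ess f(x j = e) ⊇ Ess f(x i = c) ∪ {x i}`, contradicting
maximality.
-/

open scoped Classical

namespace Paper

/-- A `k`-valued function of `n` variables. -/
abbrev Fn (k n : ℕ) : Type := (Fin n → ZMod k) → ZMod k

/-- `x i` is an essential variable of `f`. -/
def Essential {k n : ℕ} (f : Fn k n) (i : Fin n) : Prop :=
  ∃ (a : Fin n → ZMod k) (b : ZMod k), f (Function.update a i b) ≠ f a

/-- The set of essential variables of `f`. -/
def Ess {k n : ℕ} (f : Fn k n) : Set (Fin n) := {i | Essential f i}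

/-- The subfunction `f(x i = c)`. -/
def substVar {k n : ℕ} (f : Fn k n) (i : Fin n) (c : ZMod k) : Fn k n :=
  fun a => f (Function.update a i c)

/-- Substitute the constants `c` for all variables in the set `J`. -/
noncomputable def substSet {k n : ℕ} (f : Fn k n) (J : Set (Fin n)) (c : Fin n → ZMod k) : Fn k n :=
  fun a => f (fun i => if i ∈ J then c i else a i)

/-- `g` is a simple subfunction of `f`: obtained by substituting a constant
for an essential variable of `f`. -/
def SimpleSub {k n : ℕ} (g f : Fn k n) : Prop :=
  ∃ i ∈ Ess f, ∃ c : ZMod k, g = substVar f i c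

/-- `Sub f` is the set of all subfunctions of `f` (reflexive-transitive closure of
the simple subfunction relation). -/
def Sub {k n : ℕ} (f : Fn k n) : Set (Fn k n) :=
  {g | Relation.ReflTransGen (fun u v => SimpleSub v u) f g}

/-- `M` is a separable set of variables in `f`: `M = Ess g` for some subfunction `g`. -/
def Separable {k n : ℕ} (f : Fn k n) (M : Set (Fin n)) : Prop :=
  ∃ g ∈ Sub f, Ess g = M

/-- Separability phrased via simultaneous substitution for a set of variables. -/
def SeparableS {k n : ℕ} (f : Fn k n) (M : Set (Fin n)) : Prop :=
  ∃ (J : Set (Fin n)) (c : Fin n → ZMod k), Ess (substSet f J c) = M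

/-- `J` is a set of essential variables disjoint from `M` such that every assignment of
constants to `J` destroys some variable of `M`. -/
def Kills {k n : ℕ} (f : Fn k n) (M J : Set (Fin n)) : Prop :=
  J ⊆ Ess f ∧ J ∩ M = ∅ ∧ ∀ c : Fin n → ZMod k, ¬ M ⊆ Ess (substSet f J c)

/-- `Dis f M` : the family of all distributive sets of `M` in `f`
(inclusion-minimal sets `J` with `Kills f M J`). -/
def Dis {k n : ℕ} (f : Fn k n) (M : Set (Fin n)) : Set (Set (Fin n)) :=
  {J | Kills f M J ∧ ∀ J' ⊆ J, Kills f M J' → J' = J}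

/-- `β` is an s-system of the family `F`. -/
def IsSSystem {n : ℕ} (F : Set (Set (Fin n))) (β : Set (Fin n)) : Prop :=
  (∀ P ∈ F, (β ∩ P).Nonempty) ∧ ∀ x ∈ β, ∃ P ∈ F, P ∩ β = {x}

/-- `x i` is a strongly essential variable of `f`. -/
def StronglyEssential {k n : ℕ} (f : Fn k n) (i : Fin n) : Prop :=
  i ∈ Ess f ∧ ∃ c : ZMod k, Ess (substVar f i c) = Ess f \ {i}

/-- The number of subfunctions of `f` having exactly `m` essential variables. -/
noncomputable def subCount {k n : ℕ} (f : Fn k n) (m : ℕ) : ℕ :=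
  Set.ncard {g ∈ Sub f | (Ess g).ncard = m}

/-- `IsImp f l c` : the list `l` of (variable, constant) substitutions together with the
final value `c` is an implementation of `f`, i.e. a root-to-leaf path in a reduced
ordered decision diagram of `f`: each substituted variable is essential in the current
subfunction, and the final subfunction is the constant `c`. -/
inductive IsImp {k n : ℕ} : Fn k n → List (Fin n × ZMod k) → ZMod k → Prop
  | const (f : Fn k n) (c : ZMod k) : (∀ a, f a = c) → IsImp f [] c
  | step (f : Fn k n) (i : Fin n) (a : ZMod k) (l : List (Fin n × ZMod k)) (c : ZMod k) :
      i ∈ Ess f → IsImp (substVar f i a) l c → IsImp f ((i, a) :: l) c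

/-- The number of implementations of `f`. -/
noncomputable def imp {k n : ℕ} (f : Fn k n) : ℕ :=
  Set.ncard {p : List (Fin n × ZMod k) × ZMod k | IsImp f p.1 p.2}

variable {k n : ℕ} (f : Fn k n)

lemma notMem_ess_substVar_self (i : Fin n) (c : ZMod k) : i ∉ Ess (substVar f i c) := by
  rintro ⟨a, b, h⟩
  exact h (by simp [substVar, Function.update_idem])

lemma ess_substVar_subset (i : Fin n) (c : ZMod k) : Ess (substVar f i c) ⊆ Ess f \ {i} := by
  intro s hs
  have hsi : s ≠ i := by
    rintro rfl
    exact notMem_ess_substVar_self f s c hs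
  obtain ⟨a, b, h⟩ := hs
  refine ⟨⟨Function.update a i c, b, ?_⟩, hsi⟩
  simpa [substVar, Function.update_comm hsi] using h

lemma substVar_of_notMem_ess {j : Fin n} (hj : j ∉ Ess f) (e : ZMod k) : substVar f j e = f := by
  funext a
  by_contra h
  exact hj ⟨a, e, h⟩

lemma substVar_comm {i j : Fin n} (hij : i ≠ j) (c e : ZMod k) :
    substVar (substVar f i c) j e = substVar (substVar f j e) i c := by
  funext a
  simp [substVar, Function.update_comm hij]

lemma exists_mem_ess_substVar {i s : Fin n} (hs : s ∈ Ess f) (hsi : s ≠ i) :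
    ∃ c : ZMod k, s ∈ Ess (substVar f i c) := by
  obtain ⟨a, b, h⟩ := hs
  refine ⟨a i, a, b, ?_⟩
  have hupd : Function.update (Function.update a s b) i (a i) = Function.update a s b :=
    Function.update_eq_self_iff.mpr (Function.update_of_ne hsi.symm b a).symm
  simpa [substVar, hupd] using h

lemma exists_ncard_ess_substVar_lt {i j : Fin n} (hi : i ∈ Ess f) (hji : j ≠ i)
    (c : ZMod k) (hlost : j ∉ Ess (substVar f i c)) :
    ∃ e : ZMod k, (Ess (substVar f i c)).ncard < (Ess (substVar f j e)).ncard := by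
  obtain ⟨e, hie⟩ := exists_mem_ess_substVar f hi hji.symm
  refine ⟨e, ?_⟩
  have hsame : substVar (substVar f j e) i c = substVar f i c := by
    rw [substVar_comm f hji, substVar_of_notMem_ess _ hlost]
  have hsub : Ess (substVar f i c) ⊂ Ess (substVar f j e) := by
    refine Set.ssubset_iff_of_subset ?_ |>.mpr ⟨i, hie, notMem_ess_substVar_self f i c⟩
    intro s hs
    rw [← hsame] at hs
    exact (ess_substVar_subset _ i c hs).1
  exact Set.ncard_lt_ncard hsub

lemma exists_substVar_ncard_ess_max (hf : (Ess f).Nonempty) :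
    ∃ i ∈ Ess f, ∃ c : ZMod k, ∀ j ∈ Ess f, ∀ e : ZMod k,
      (Ess (substVar f j e)).ncard ≤ (Ess (substVar f i c)).ncard := by
  obtain ⟨i₀, hi₀⟩ := hf
  obtain ⟨_, ⟨i, hi, c, rfl⟩, hmax⟩ := Set.exists_max_image
    {E | ∃ i ∈ Ess f, ∃ c : ZMod k, Ess (substVar f i c) = E} Set.ncard (Set.toFinite _)
    ⟨_, i₀, hi₀, 0, rfl⟩
  exact ⟨i, hi, c, fun j hj e => hmax _ ⟨j, hj, e, rfl⟩⟩

end Paper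

open Paper in
theorem exists_strongly_essential_general {k n : ℕ} (f : Fn k n)
    (hf : (Ess f).Nonempty) :
    ∃ i ∈ Ess f, ∃ c : ZMod k, Ess (substVar f i c) = Ess f \ {i} := by
  obtain ⟨i, hi, c, hmax⟩ := exists_substVar_ncard_ess_max f hf
  refine ⟨i, hi, c, (ess_substVar_subset f i c).antisymm ?_⟩
  rintro j ⟨hj, hji⟩
  by_contra hlost
  obtain ⟨e, hlt⟩ := exists_ncard_ess_substVar_lt f hi hji c hlost
  exact (hmax j hj e).not_gt hlt

open Paper in
/-- every `k`-valued function (`k ≥ 2`) with at least one essential variable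
has a strongly essential variable. -/
theorem exists_strongly_essential {k n : ℕ} (hk : 2 ≤ k) (f : Fn k n)
    (hf : (Ess f).Nonempty) :
    ∃ i ∈ Ess f, ∃ c : ZMod k, Ess (substVar f i c) = Ess f \ {i} :=
  exists_strongly_essential_general f hf
end

section
/- Let f : Z_k^n → Z_k have at least two essential variables. Then f has at least two strongly essential variables. -/
open scoped Classical

/-! Bundle an essential variable `x` of `G` into the codomain: `fiberwise G x` has the essential
variables of `G` other than `x`. Induction on their number, with the claim strengthened so that
the good slice `y = d` must pass through a prescribed level set, makes the slice of
`fiberwise G x` pass through a point where `G` still depends on `x`; then the slice `y = d` of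
`G` itself keeps every essential variable but `y`. Starting from any essential variable this
produces a strongly essential one different from it, and doing it twice gives two. -/

namespace Paper

open Function

universe u v

section EssentialVariables

variable {ι α β : Type*} [DecidableEq ι]

/-- `Ess` for an arbitrary codomain; `Ess f = essVars f` and `substVar f = slice f` hold by `rfl`. -/
def essVars (G : (ι → α) → β) : Set ι := {i | ∃ a b, G (update a i b) ≠ G a}

def slice (G : (ι → α) → β) (i : ι) (c : α) : (ι → α) → β := fun x => G (update x i c)

/-- Records, at each point, the whole restriction of `G` to the line through it in direction `i`;
this trades one variable for a bigger codomain. -/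
def fiberwise (G : (ι → α) → β) (i : ι) : (ι → α) → α → β := fun x c => G (update x i c)

lemma essVars_slice_subset (G : (ι → α) → β) (i : ι) (c : α) :
    essVars (slice G i c) ⊆ essVars G \ {i} := by
  rintro z ⟨a, b, hab⟩
  have hzi : z ≠ i := by
    rintro rfl
    exact hab (by simp only [slice, update_idem])
  refine ⟨⟨update a i c, b, ?_⟩, hzi⟩
  rwa [slice, slice, update_comm hzi] at hab

lemma essVars_fiberwise (G : (ι → α) → β) (i : ι) :
    essVars (fiberwise G i) = essVars G \ {i} := by
  ext z
  constructor
  · rintro ⟨a, b, hab⟩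
    obtain ⟨c, hc⟩ := ne_iff.mp hab
    exact essVars_slice_subset G i c ⟨a, b, hc⟩
  · rintro ⟨⟨a, b, hab⟩, hzi : z ≠ i⟩
    have hfix : update (update a z b) i (a i) = update a z b := by
      rw [← update_of_ne hzi.symm b a, update_eq_self]
    refine ⟨a, b, ne_iff.mpr ⟨a i, ?_⟩⟩
    simpa only [fiberwise, hfix, update_eq_self] using hab

lemma fiberwise_slice {x y : ι} (hxy : x ≠ y) (G : (ι → α) → β) (d : α) :
    fiberwise (slice G y d) x = slice (fiberwise G x) y d := by
  funext a c
  simp only [fiberwise, slice, update_comm hxy]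

lemma mem_essVars_slice {G : (ι → α) → β} {x y : ι} (hxy : x ≠ y) {u : ι → α} {c₁ c₂ : α}
    (hu : G (update u x c₁) ≠ G (update u x c₂)) : x ∈ essVars (slice G y (u y)) := by
  refine ⟨update u x c₂, c₁, ?_⟩
  simpa only [slice, update_idem, update_comm hxy, update_of_ne hxy.symm, update_eq_self]
    using hu

lemma essVars_slice_eq_of_fiberwise {G : (ι → α) → β} {x y : ι} (hxy : x ≠ y) {d : α}
    (hx : x ∈ essVars (slice G y d))
    (h : essVars (slice (fiberwise G x) y d) = essVars (fiberwise G x) \ {y}) :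
    essVars (slice G y d) = essVars G \ {y} := by
  rw [← fiberwise_slice hxy, essVars_fiberwise, essVars_fiberwise, Set.sdiff_sdiff_comm] at h
  have hx' : x ∈ essVars G \ {y} := essVars_slice_subset G y d hx
  rw [← Set.insert_eq_of_mem hx, ← Set.insert_sdiff_singleton, h, Set.insert_sdiff_singleton,
    Set.insert_eq_of_mem hx']

end EssentialVariables

lemma eq_univ_of_forall_update_mem {ι α : Type*} [Finite ι] [DecidableEq ι] {U : Set (ι → α)}
    (hU : ∀ a ∈ U, ∀ i c, update a i c ∈ U) (hne : U.Nonempty) : U = Set.univ := by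
  have : Fintype ι := Fintype.ofFinite ι
  obtain ⟨a, ha⟩ := hne
  have piecewise_mem (b : ι → α) (s : Finset ι) : s.piecewise b a ∈ U := by
    induction s using Finset.induction_on with
    | empty => simpa only [Finset.piecewise_empty] using ha
    | insert i s _ ih => simpa only [Finset.piecewise_insert] using hU _ ih i (b i)
  exact Set.eq_univ_of_forall fun b => by
    simpa only [Finset.piecewise_univ] using piecewise_mem b Finset.univ

lemma exists_update_ne {ι α β : Type*} [Finite ι] [DecidableEq ι] {G : (ι → α) → β}
    (hG : (essVars G).Nonempty) {S : Set β} (hS : ∃ a, G a ∈ S) :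
    ∃ a, G a ∈ S ∧ ∃ i c, G (update a i c) ≠ G a := by
  by_contra! h
  obtain ⟨a₀, ha₀⟩ := hS
  have hU : ∀ a ∈ G ⁻¹' S, ∀ i c, update a i c ∈ G ⁻¹' S := fun a ha i c => by
    rw [Set.mem_preimage, h a ha i c]
    exact ha
  obtain ⟨i, a, b, hab⟩ := hG
  have hall : G ⁻¹' S = Set.univ := eq_univ_of_forall_update_mem hU ⟨a₀, ha₀⟩
  exact hab (h a (Set.eq_univ_iff_forall.mp hall a) i b)

/-- The induction on the number of essential variables needs the extra freedom of a prescribed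
set `S` of values: the slice has to meet `G ⁻¹' S`. -/
theorem exists_essVars_slice_eq {ι : Type*} {α : Type u} [Finite ι] [DecidableEq ι]
    {V : Type (max u v)}
    (G : (ι → α) → V) (hG : (essVars G).Nonempty) (S : Set V) (hS : ∃ a, G a ∈ S) :
    ∃ y ∈ essVars G, ∃ u, G u ∈ S ∧ essVars (slice G y (u y)) = essVars G \ {y} := by
  obtain ⟨m, hm⟩ : ∃ m, (essVars G).ncard = m + 1 :=
    Nat.exists_eq_add_one.mpr ((Set.ncard_pos).mpr hG)
  induction m generalizing V with
  | zero =>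
    obtain ⟨y, hy⟩ := Set.ncard_eq_one.mp hm
    obtain ⟨a, ha⟩ := hS
    have hsub := essVars_slice_subset G y (a y)
    rw [hy, Set.sdiff_self, Set.subset_empty_iff] at hsub
    exact ⟨y, hy ▸ rfl, a, ha, by rw [hsub, hy, Set.sdiff_self]⟩
  | succ m ih =>
    obtain ⟨a, ha, x, c, hc⟩ := exists_update_ne hG hS
    have hx : x ∈ essVars G := ⟨a, c, hc⟩
    have hFm : (essVars (fiberwise G x)).ncard = m + 1 := by
      rw [essVars_fiberwise, Set.ncard_sdiff_singleton_of_mem hx, hm, Nat.add_sub_cancel]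
    obtain ⟨y, hy, u, ⟨⟨c', hc'⟩, c₁, c₂, hu⟩, hslice⟩ :=
      ih (fiberwise G x) ((Set.ncard_pos).mp (by omega))
        {h | (∃ c, h c ∈ S) ∧ ∃ c₁ c₂, h c₁ ≠ h c₂}
        ⟨a, ⟨a x, by simpa only [fiberwise, update_eq_self] using ha⟩, c, a x,
          by simpa only [fiberwise, update_eq_self] using hc⟩ hFm
    rw [essVars_fiberwise] at hy
    have hxy : x ≠ y := fun h => hy.2 h.symm
    refine ⟨y, hy.1, update u x c', hc', ?_⟩
    rw [update_of_ne hxy.symm]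
    exact essVars_slice_eq_of_fiberwise hxy (mem_essVars_slice hxy hu) hslice

theorem exists_ne_essVars_slice_eq {ι : Type*} {α : Type u} {β : Type v} [Finite ι]
    [DecidableEq ι] (G : (ι → α) → β) {y : ι} (hy : y ∈ essVars G)
    (hne : (essVars G \ {y}).Nonempty) :
    ∃ z ∈ essVars G \ {y}, ∃ d, essVars (slice G z d) = essVars G \ {z} := by
  obtain ⟨a, b, hab⟩ := hy
  obtain ⟨z, hz, u, ⟨c₁, c₂, hu⟩, hslice⟩ :=
    exists_essVars_slice_eq (fiberwise G y) (by rwa [essVars_fiberwise])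
      {h | ∃ c₁ c₂, h c₁ ≠ h c₂} ⟨a, b, a y, by simpa only [fiberwise, update_eq_self] using hab⟩
  rw [essVars_fiberwise] at hz
  have hyz : y ≠ z := fun h => hz.2 h.symm
  exact ⟨z, hz, u z, essVars_slice_eq_of_fiberwise hyz (mem_essVars_slice hyz hu) hslice⟩

end Paper

open Paper in
theorem exists_two_strongly_essential_general {k n : ℕ} (f : Fn k n)
    (hf : 2 ≤ (Ess f).ncard) :
    ∃ i j : Fin n, i ≠ j ∧ StronglyEssential f i ∧ StronglyEssential f j := by
  have other : ∀ y ∈ Ess f, ∃ z, z ≠ y ∧ StronglyEssential f z := fun y hy => by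
    have hne : (Ess f \ {y}).Nonempty :=
      Set.nonempty_of_ncard_ne_zero (by rw [Set.ncard_sdiff_singleton_of_mem hy]; omega)
    obtain ⟨z, ⟨hz, hzy⟩, d, hd⟩ := exists_ne_essVars_slice_eq f hy hne
    exact ⟨z, hzy, hz, d, hd⟩
  obtain ⟨y₀, hy₀⟩ := Set.nonempty_of_ncard_ne_zero (by omega : (Ess f).ncard ≠ 0)
  obtain ⟨y₁, -, hy₁⟩ := other y₀ hy₀
  obtain ⟨y₂, hy₂₁, hy₂⟩ := other y₁ hy₁.1
  exact ⟨y₁, y₂, hy₂₁.symm, hy₁, hy₂⟩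

open Paper in
/-- a function with at least two essential variables has at least two
strongly essential variables. -/
theorem exists_two_strongly_essential {k n : ℕ} (hk : 2 ≤ k) (f : Fn k n)
    (hf : 2 ≤ (Ess f).ncard) :
    ∃ i j : Fin n, i ≠ j ∧ StronglyEssential f i ∧ StronglyEssential f j :=
  exists_two_strongly_essential_general f hf
end

section
/- Let M be a non-empty inseparable set of essential variables of f : Z_k^n → Z_k and let β be an s-system of the family Dis(M,f) of distributive sets of M in f. Then M ∪ β is a separable set of f. -/
open scoped Classical

/-!
Substitute constants for the set `N = Ess f \ (M ∪ β)` of all essential variables outside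
`M ∪ β`. Since `β` meets every distributive set, `N` contains none, so `N` does not kill `M`:
some assignment `c` keeps all of `M` essential in `g = f(N = c)`. If some `x ∈ β` were
inessential in `g`, then `g = f(N ∪ {x} = c)`; but `N ∪ {x}` contains the distributive set `P`
with `P ∩ β = {x}`, so it kills `M`, a contradiction. Hence `Ess g = M ∪ β`.
-/

namespace Paper

variable {k n : ℕ}

theorem substSet_substSet (f : Fn k n) (J J' : Set (Fin n)) (c : Fin n → ZMod k) :
    substSet (substSet f J c) J' c = substSet f (J ∪ J') c := by
  funext a
  simp only [substSet, Set.mem_union]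
  congr 1
  funext i
  by_cases hi : i ∈ J <;> simp [hi]

theorem ess_substSet_subset (f : Fn k n) (J : Set (Fin n)) (c : Fin n → ZMod k) :
    Ess (substSet f J c) ⊆ Ess f \ J := by
  rintro i ⟨a, b, hab⟩
  have hupdate : (fun j => if j ∈ J then c j else Function.update a i b j)
      = Function.update (fun j => if j ∈ J then c j else a j) i (if i ∈ J then c i else b) := by
    funext j
    by_cases hji : j = i
    · subst hji; simp
    · simp [Function.update_of_ne hji]
  simp only [substSet, hupdate] at hab
  have hiJ : i ∉ J := fun hiJ => hab (by rw [Function.update_eq_self_iff.2 (by simp [hiJ])])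
  exact ⟨⟨_, b, by simpa [hiJ] using hab⟩, hiJ⟩

theorem ess_substSet_anti (f : Fn k n) {J J' : Set (Fin n)} (h : J ⊆ J')
    (c : Fin n → ZMod k) : Ess (substSet f J' c) ⊆ Ess (substSet f J c) := by
  rw [← Set.union_eq_right.2 h, ← substSet_substSet]
  exact (ess_substSet_subset _ _ _).trans Set.sdiff_subset

theorem substSet_singleton_of_notMem_ess {g : Fn k n} {x : Fin n} (hx : x ∉ Ess g)
    (c : Fin n → ZMod k) : substSet g {x} c = g := by
  funext a
  by_contra hne
  refine hx ⟨a, c x, ?_⟩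
  unfold substSet at hne
  convert hne using 2
  funext i
  by_cases hi : i = x
  · subst hi; simp
  · simp [hi]

theorem Kills.mono {f : Fn k n} {M J J' : Set (Fin n)} (h : Kills f M J) (hJJ' : J ⊆ J')
    (hJ' : J' ⊆ Ess f) (hJ'M : J' ∩ M = ∅) : Kills f M J' :=
  ⟨hJ', hJ'M, fun c hc => h.2.2 c (hc.trans (ess_substSet_anti f hJJ' c))⟩

theorem Kills.notMem_of_mem {f : Fn k n} {M J : Set (Fin n)} (h : Kills f M J) {i : Fin n}
    (hi : i ∈ J) : i ∉ M :=
  fun hiM => (h.2.1 ▸ ⟨hi, hiM⟩ : i ∈ (∅ : Set (Fin n)))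

theorem Kills.exists_mem_dis_subset {f : Fn k n} {M J : Set (Fin n)} (h : Kills f M J) :
    ∃ P ∈ Dis f M, P ⊆ J := by
  obtain ⟨P, hPJ, hPK, hPmin⟩ := exists_minimal_le_of_wellFoundedLT (Kills f M) J h
  exact ⟨P, ⟨hPK, fun J' hJ'P hJ' => (hPmin hJ' hJ'P).antisymm' hJ'P⟩, hPJ⟩

theorem exists_subset_ess_substSet_of_meets_dis {f : Fn k n} {M β : Set (Fin n)}
    (hβ : ∀ P ∈ Dis f M, (β ∩ P).Nonempty) :
    ∃ c, M ⊆ Ess (substSet f (Ess f \ (M ∪ β)) c) := by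
  by_contra! hkill
  have hK : Kills f M (Ess f \ (M ∪ β)) :=
    ⟨Set.sdiff_subset, Set.eq_empty_of_forall_notMem fun i ⟨hi, hiM⟩ => hi.2 (Or.inl hiM),
      fun c => hkill c⟩
  obtain ⟨P, hP, hPN⟩ := hK.exists_mem_dis_subset
  obtain ⟨x, hxβ, hxP⟩ := hβ P hP
  exact (hPN hxP).2 (Or.inr hxβ)

theorem subset_ess_substSet_of_isSSystem {f : Fn k n} {M β : Set (Fin n)}
    (hβ : IsSSystem (Dis f M) β) {c : Fin n → ZMod k}
    (hMc : M ⊆ Ess (substSet f (Ess f \ (M ∪ β)) c)) :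
    β ⊆ Ess (substSet f (Ess f \ (M ∪ β)) c) := by
  intro x hxβ
  by_contra hx
  obtain ⟨P, ⟨hPK, -⟩, hPβ⟩ := hβ.2 x hxβ
  have hxP : x ∈ P := (hPβ ▸ Set.mem_singleton x : x ∈ P ∩ β).1
  have hPN : P ⊆ Ess f \ (M ∪ β) ∪ {x} := by
    intro p hp
    by_cases hpβ : p ∈ β
    · exact Or.inr (hPβ ▸ ⟨hp, hpβ⟩)
    · exact Or.inl ⟨hPK.1 hp, by simp [hPK.notMem_of_mem hp, hpβ]⟩
  have hK : Kills f M (Ess f \ (M ∪ β) ∪ {x}) :=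
    hPK.mono hPN (Set.union_subset Set.sdiff_subset (by simpa using hPK.1 hxP))
      (Set.eq_empty_of_forall_notMem fun i ⟨hi, hiM⟩ => by
        rcases hi with hi | rfl
        exacts [hi.2 (Or.inl hiM), hPK.notMem_of_mem hxP hiM])
  apply hK.2.2 c
  rwa [← substSet_substSet, substSet_singleton_of_notMem_ess hx]

end Paper

open Paper in
theorem union_s_system_separable_general {k n : ℕ} (f : Fn k n)
    (M β : Set (Fin n)) (hβ : IsSSystem (Dis f M) β) :
    SeparableS f (M ∪ β) := by
  obtain ⟨c, hMc⟩ := exists_subset_ess_substSet_of_meets_dis hβ.1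
  refine ⟨Ess f \ (M ∪ β), c, Set.Subset.antisymm ?_ ?_⟩
  · intro i hi
    obtain ⟨hif, hiN⟩ := ess_substSet_subset f _ c hi
    by_contra hiMβ
    exact hiN ⟨hif, hiMβ⟩
  · exact Set.union_subset hMc (subset_ess_substSet_of_isSSystem hβ hMc)

open Paper in
/-- if `M` is a non-empty inseparable set of essential variables of `f` and
`β` is an s-system of the family of distributive sets of `M`, then `M ∪ β` is separable. -/
theorem union_s_system_separable {k n : ℕ} (hk : 2 ≤ k) (f : Fn k n)
    (M β : Set (Fin n)) (hM : M ⊆ Ess f) (hMne : M.Nonempty)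
    (hins : ¬ SeparableS f M) (hβ : IsSSystem (Dis f M) β) :
    SeparableS f (M ∪ β) :=
  union_s_system_separable_general f M β hβ
end

section
/- Let σ : Z_k → Z_k and define the transformation ψ_σ on k-valued functions by (ψ_σ f)(a) = σ(f(a)) for all a ∈ Z_k^n. Then for all f ∈ P_k^n, f and ψ_σ(f) have the same sets of essential variables and the same separable sets (indeed sub_m(f) = sub_m(ψ_σ f) for all m) if and only if σ is a permutation of Z_k (k > 2, n ≥ 1). -/
open scoped Classical

/-! An injective `σ` does not change which variables are essential, so `g ↦ σ ∘ g` maps the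
subfunctions of `f` bijectively onto those of `σ ∘ f`, preserving essential variables.
Conversely, if `σ a = σ b` with `a ≠ b`, then `x ↦ if x₀ = 0 then a else b` depends on `x₀`
while its image under `σ` is constant; on the finite `Z_k` injective means bijective. -/

namespace Paper

variable {k n : ℕ} {σ : ZMod k → ZMod k}

theorem ess_comp_of_injective (hσ : Function.Injective σ) (f : Fn k n) :
    Ess (fun a => σ (f a)) = Ess f := by
  ext i
  exact exists₂_congr fun _ _ => hσ.ne_iff

theorem sub_comp_of_injective (hσ : Function.Injective σ) (f : Fn k n) :
    Sub (fun a => σ (f a)) = (fun g a => σ (g a)) '' Sub f := by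
  ext h
  constructor
  · intro hh
    induction hh with
    | refl => exact ⟨f, .refl, rfl⟩
    | tail _ hstep ih =>
      obtain ⟨g, hg, rfl⟩ := ih
      obtain ⟨i, hi, c, rfl⟩ := hstep
      rw [ess_comp_of_injective hσ] at hi
      exact ⟨substVar g i c, hg.tail ⟨i, hi, c, rfl⟩, rfl⟩
  · rintro ⟨g, hg, rfl⟩
    induction hg with
    | refl => exact .refl
    | tail _ hstep ih =>
      obtain ⟨i, hi, c, rfl⟩ := hstep
      exact ih.tail ⟨i, by rwa [ess_comp_of_injective hσ], c, rfl⟩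

theorem separable_comp_iff (hσ : Function.Injective σ) (f : Fn k n) (M : Set (Fin n)) :
    Separable (fun a => σ (f a)) M ↔ Separable f M := by
  simp only [Separable, sub_comp_of_injective hσ, Set.exists_mem_image,
    ess_comp_of_injective hσ]

theorem subCount_comp (hσ : Function.Injective σ) (f : Fn k n) (m : ℕ) :
    subCount (fun a => σ (f a)) m = subCount f m := by
  have himage : {g ∈ Sub (fun a => σ (f a)) | (Ess g).ncard = m} =
      (fun g a => σ (g a)) '' {g ∈ Sub f | (Ess g).ncard = m} := by
    ext h
    simp only [sub_comp_of_injective hσ, Set.mem_ofPred_eq, Set.mem_image]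
    constructor
    · rintro ⟨⟨g, hg, rfl⟩, hm⟩
      exact ⟨g, ⟨hg, by rwa [ess_comp_of_injective hσ] at hm⟩, rfl⟩
    · rintro ⟨g, ⟨hg, hm⟩, rfl⟩
      exact ⟨⟨g, hg, rfl⟩, by rwa [ess_comp_of_injective hσ]⟩
  rw [subCount, himage]
  exact Set.ncard_image_of_injective _ (hσ.comp_left (α := Fin n → ZMod k))

theorem ess_eq_empty_of_forall_eq {f : Fn k n} {c : ZMod k} (hf : ∀ a, f a = c) : Ess f = ∅ :=
  Set.eq_empty_of_forall_notMem fun _ ⟨a, _, hab⟩ => hab ((hf _).trans (hf a).symm)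

theorem mem_ess_ite [Nontrivial (ZMod k)] {a b : ZMod k} (hab : a ≠ b) (i : Fin n) (c : ZMod k) :
    i ∈ Ess (fun x : Fin n → ZMod k => if x i = c then a else b) := by
  obtain ⟨d, hd⟩ := exists_ne c
  refine ⟨fun _ => c, d, ?_⟩
  simpa [hd] using hab.symm

theorem injective_of_forall_ess_comp_eq [Nontrivial (ZMod k)] (hn : 1 ≤ n)
    (H : ∀ f : Fn k n, Ess (fun a => σ (f a)) = Ess f) : Function.Injective σ := by
  intro a b hσab
  by_contra hab
  have hi := mem_ess_ite hab ⟨0, hn⟩ 0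
  rw [← H, ess_eq_empty_of_forall_eq (c := σ b) fun x => by split_ifs <;> simp [hσab]] at hi
  exact hi

end Paper

open Paper in
/-- the range transformation `ψ_σ : f ↦ σ ∘ f` preserves essential
variables, separable sets and the numbers of subfunctions with `m` essential variables
for every `f ∈ P_k^n` if and only if `σ` is a permutation of `Z_k` (`k > 2`, `n ≥ 1`). -/
theorem range_transformation_iff_permutation {k n : ℕ} (hk : 2 < k) (hn : 1 ≤ n)
    (σ : ZMod k → ZMod k) :
    (∀ f : Fn k n,
        Ess (fun a => σ (f a)) = Ess f ∧
        (∀ M : Set (Fin n), Separable f M ↔ Separable (fun a => σ (f a)) M) ∧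
        (∀ m : ℕ, subCount f m = subCount (fun a => σ (f a)) m)) ↔
      Function.Bijective σ := by
  have : NeZero k := ⟨by omega⟩
  have : Fact (1 < k) := ⟨by omega⟩
  refine ⟨fun H => Finite.injective_iff_bijective.mp
    (injective_of_forall_ess_comp_eq hn fun f => (H f).1), fun hσ f => ?_⟩
  exact ⟨ess_comp_of_injective hσ.1 f, fun M => (separable_comp_iff hσ.1 f M).symm,
    fun m => (subCount_comp hσ.1 f m).symm⟩
end
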